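/- Define a relation on strings over {a,b,c,d} as the least unary predicate Ans on words generated by: R₂(x) holds iff x = w·a·w for some nonempty w ∈ {c,d}⁺; R₁(x) holds if x = a·y·c and R₁(y), or x = b·y·b and R₂(y); Ans holds of x iff R₁(x). Then Ans(x) holds if and only if x = aᶻ·b·w·a·w·b·cᶻ for some z ∈ ℕ and w ∈ {c,d}⁺. -/

import Mathlib

inductive ABCD : Type
  | a : ABCD
  | b : ABCD
  | c : ABCD
  | d : ABCD

/-- `R₂ x` : `x = w·a·w` for some nonempty `w ∈ {c,d}⁺`. -/
def R2 (x : List ABCD) : Prop :=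
  ∃ w : List ABCD, w ≠ [] ∧ (∀ ch ∈ w, ch = ABCD.c ∨ ch = ABCD.d) ∧
    x = w ++ [ABCD.a] ++ w

/-- `R₁` : least predicate with `R₁(b·y·b)` when `R₂ y`, and `R₁(a·y·c)` when `R₁ y`. -/
inductive R1 : List ABCD → Prop
  | base {y : List ABCD} : R2 y → R1 (ABCD.b :: y ++ [ABCD.b])
  | step {y : List ABCD} : R1 y → R1 (ABCD.a :: y ++ [ABCD.c])

open List

theorem cons_append_replicate_concat {α : Type*} (x y : α) (n : ℕ) (u : List α) :
    x :: (replicate n x ++ u ++ replicate n y) ++ [y] =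
      replicate (n + 1) x ++ u ++ replicate (n + 1) y := by
  simp [replicate_succ, ← replicate_succ']

theorem R1_iff_exists_R2 (x : List ABCD) :
    R1 x ↔ ∃ (z : ℕ) (y : List ABCD), R2 y ∧
      x = replicate z ABCD.a ++ (ABCD.b :: y ++ [ABCD.b]) ++ replicate z ABCD.c := by
  constructor
  · intro h
    induction h with
    | base hy => exact ⟨0, _, hy, by simp⟩
    | step _ ih =>
      obtain ⟨z, y, hy, rfl⟩ := ih
      exact ⟨z + 1, y, hy, cons_append_replicate_concat _ _ _ _⟩
  · rintro ⟨z, y, hy, rfl⟩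
    induction z with
    | zero => simpa using R1.base hy
    | succ n ih => simpa only [cons_append_replicate_concat] using R1.step ih

theorem drx_constraint_program_language (x : List ABCD) :
    R1 x ↔ ∃ (z : ℕ) (w : List ABCD), w ≠ [] ∧
      (∀ ch ∈ w, ch = ABCD.c ∨ ch = ABCD.d) ∧
      x = List.replicate z ABCD.a ++ [ABCD.b] ++ w ++ [ABCD.a] ++ w ++ [ABCD.b] ++
        List.replicate z ABCD.c := by
  rw [R1_iff_exists_R2]
  constructor
  · rintro ⟨z, _, ⟨w, hw, hcd, rfl⟩, rfl⟩
    exact ⟨z, w, hw, hcd, by simp⟩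
  · rintro ⟨z, w, hw, hcd, rfl⟩
    exact ⟨z, _, ⟨w, hw, hcd, rfl⟩, by simp⟩
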